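/- arXiv:cs/0606055 — 3 statements merged into one kernel-verified Lean document; each statement's English description precedes it below -/
import Mathlib

section
/- Every point (x,y,z) on the Steiner roman surface x²y² + y²z² + x²z² = 2xyz satisfies the four inequalities -x+y+z ≤ 1, x-y+z ≤ 1, x+y-z ≤ 1, -x-y-z ≤ 1 provided -1 ≤ x,y,z ≤ 1; i.e., the surface restricted to the cube [-1,1]³ is contained in the tetrahedron bounded by the planes -x+y+z = 1, x-y+z = 1, x+y-z = 1, -x-y-z = 1. -/
theorem steiner_in_tetrahedron (x y z : ℝ)
    (hS : x^2*y^2 + y^2*z^2 + x^2*z^2 = 2*x*y*z)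
    (hx : -1 ≤ x ∧ x ≤ 1) (hy : -1 ≤ y ∧ y ≤ 1) (hz : -1 ≤ z ∧ z ≤ 1) :
    -x + y + z ≤ 1 ∧ x - y + z ≤ 1 ∧ x + y - z ≤ 1 ∧ -x - y - z ≤ 1 := by
  obtain ⟨hx1, hx2⟩ := hx
  obtain ⟨hy1, hy2⟩ := hy
  obtain ⟨hz1, hz2⟩ := hz
  have hnn : 0 ≤ x*y*z := by nlinarith [sq_nonneg (x*y), sq_nonneg (y*z), sq_nonneg (x*z)]
  rcases eq_or_lt_of_le hnn with h0 | hpos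
  · -- xyz = 0, so all pairwise products are 0
    have hsum : (x*y)^2 + (y*z)^2 + (x*z)^2 = 0 := by nlinarith
    have hxy : x*y = 0 := by nlinarith [sq_nonneg (x*y), sq_nonneg (y*z), sq_nonneg (x*z)]
    have hyz : y*z = 0 := by nlinarith [sq_nonneg (x*y), sq_nonneg (y*z), sq_nonneg (x*z)]
    have hxz : x*z = 0 := by nlinarith [sq_nonneg (x*y), sq_nonneg (y*z), sq_nonneg (x*z)]
    rcases mul_eq_zero.1 hxy with h | h <;>
      rcases mul_eq_zero.1 hyz with h' | h' <;>
      rcases mul_eq_zero.1 hxz with h'' | h'' <;>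
      refine ⟨by linarith, by linarith, by linarith, by linarith⟩
  · refine ⟨?_, ?_, ?_, ?_⟩
    · have key : 0 ≤ 2*(x*y*z)*(1+x-y-z) := by nlinarith [sq_nonneg (y*z - x*y - x*z)]
      nlinarith [key, hpos]
    · have key : 0 ≤ 2*(x*y*z)*(1-x+y-z) := by nlinarith [sq_nonneg (x*z - x*y - y*z)]
      nlinarith [key, hpos]
    · have key : 0 ≤ 2*(x*y*z)*(1-x-y+z) := by nlinarith [sq_nonneg (x*y - y*z - x*z)]
      nlinarith [key, hpos]
    · have key : 0 ≤ 2*(x*y*z)*(1+x+y+z) := by nlinarith [sq_nonneg (x*y + y*z + x*z)]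
      nlinarith [key, hpos]
end

section
/- With G and G̃ as above (θ_{i,j,k} = 0 for i+j < n, G(α(1-β),αβ) = α^n G̃(α,β)), the boundary value of the blown-up surface at α = 0 is the Bernstein curve of degree n on the top coefficients: G̃(0,β) = Σ_{i+j=n} θ_{i,j,m-n} · (m!/(i!j!(m-n)!)) · β^j (1-β)^i. -/
/-!
Along the blow-up `u = α (1 - β)`, `v = α β` one has `1 - u - v = 1 - α`, so the Bernstein monomial
`u^i v^j (1 - u - v)^k` equals `α^(i+j) (1 - β)^i β^j (1 - α)^k`. As `θ_{i,j,k}` vanishes for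
`i + j < n`, the factor `α^n` comes out of `G`, leaving a polynomial in `α` that agrees with `G̃`
for `α ≠ 0`, hence also at `α = 0` by continuity. At `α = 0` only the terms with `i + j = n`
survive, and they form the Bernstein curve.
-/

open Finset Filter Topology

namespace BernsteinBlowup

variable {V : Type*} [AddCommGroup V] [Module ℝ V]

noncomputable def trinomial (m i j : ℕ) : ℝ :=
  (m.factorial : ℝ) / ((i.factorial : ℝ) * (j.factorial : ℝ) * ((m - i - j).factorial : ℝ))

noncomputable def bernsteinSurface (m : ℕ) (θ : ℕ → ℕ → ℕ → V) (u v : ℝ) : V :=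
  ∑ i ∈ range (m + 1), ∑ j ∈ range (m + 1 - i),
    (trinomial m i j * u ^ i * v ^ j * (1 - u - v) ^ (m - i - j)) • θ i j (m - i - j)

/-- For `i + j < n` the truncated exponent `i + j - n` is `0`; these terms are harmless only
because `θ` vanishes there. -/
noncomputable def blowupQuotient (m n : ℕ) (θ : ℕ → ℕ → ℕ → V) (β α : ℝ) : V :=
  ∑ i ∈ range (m + 1), ∑ j ∈ range (m + 1 - i),
    (trinomial m i j * α ^ (i + j - n) * (1 - β) ^ i * β ^ j * (1 - α) ^ (m - i - j)) •
      θ i j (m - i - j)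

variable {m n : ℕ} {θ : ℕ → ℕ → ℕ → V}

theorem bernsteinSurface_blowup (hθ : ∀ i j k : ℕ, i + j + k = m → i + j < n → θ i j k = 0)
    (α β : ℝ) :
    bernsteinSurface m θ (α * (1 - β)) (α * β) = α ^ n • blowupQuotient m n θ β α := by
  simp only [bernsteinSurface, blowupQuotient, smul_sum, smul_smul]
  refine sum_congr rfl fun i hi => sum_congr rfl fun j hj => ?_
  rw [mem_range] at hi hj
  by_cases hij : i + j < n
  · simp only [hθ i j (m - i - j) (by omega) hij, smul_zero]
  have hpow : α ^ i * α ^ j = α ^ n * α ^ (i + j - n) := by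
    rw [← pow_add, ← pow_add]
    congr 1
    omega
  have hline : 1 - α * (1 - β) - α * β = 1 - α := by ring
  rw [hline, mul_pow, mul_pow]
  congr 1
  linear_combination (trinomial m i j * (1 - β) ^ i * β ^ j * (1 - α) ^ (m - i - j)) * hpow

theorem continuous_blowupQuotient [TopologicalSpace V] [ContinuousAdd V] [ContinuousSMul ℝ V]
    (β : ℝ) : Continuous (blowupQuotient m n θ β) := by
  unfold blowupQuotient
  fun_prop

theorem blowupQuotient_zero (hnm : n ≤ m)
    (hθ : ∀ i j k : ℕ, i + j + k = m → i + j < n → θ i j k = 0) (β : ℝ) :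
    blowupQuotient m n θ β 0 =
      ∑ i ∈ range (n + 1),
        ((m.factorial : ℝ) / ((i.factorial : ℝ) * ((n - i).factorial : ℝ) *
            ((m - n).factorial : ℝ)) * β ^ (n - i) * (1 - β) ^ i) •
          θ i (n - i) (m - n) := by
  have off_diagonal : ∀ i j, i + j ≤ m → i + j ≠ n →
      (trinomial m i j * 0 ^ (i + j - n) * (1 - β) ^ i * β ^ j * (1 - 0) ^ (m - i - j)) •
        θ i j (m - i - j) = 0 := by
    intro i j hij hne
    rcases Nat.lt_or_gt_of_ne hne with hlt | hgt
    · rw [hθ i j _ (by omega) hlt, smul_zero]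
    · rw [zero_pow (by omega), mul_zero, zero_mul, zero_mul, zero_mul, zero_smul]
  rw [blowupQuotient, ← sum_subset (range_subset_range.2 (by omega : n + 1 ≤ m + 1))]
  · refine sum_congr rfl fun i hi => ?_
    rw [mem_range] at hi
    rw [sum_eq_single_of_mem (n - i) (by rw [mem_range]; omega) fun j hj hne =>
      off_diagonal i j (by rw [mem_range] at hj; omega) (by omega)]
    have hk : m - i - (n - i) = m - n := by omega
    have hdiag : i + (n - i) - n = 0 := by omega
    simp only [trinomial, hk, hdiag, pow_zero, sub_zero, one_pow]
    congr 1
    ring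
  · intro i hi hi'
    rw [mem_range] at hi hi'
    exact sum_eq_zero fun j hj => off_diagonal i j (by rw [mem_range] at hj; omega) (by omega)

end BernsteinBlowup

open BernsteinBlowup in
theorem blowup_boundary_curve {V : Type*} [AddCommGroup V] [Module ℝ V]
    [TopologicalSpace V] [IsTopologicalAddGroup V] [ContinuousSMul ℝ V] [T2Space V]
    (m n : ℕ) (hnm : n ≤ m) (θ : ℕ → ℕ → ℕ → V)
    (hθ : ∀ i j k : ℕ, i + j + k = m → i + j < n → θ i j k = 0)
    (G : ℝ → ℝ → V)
    (hG : ∀ u v : ℝ, G u v =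
      ∑ i ∈ Finset.range (m + 1), ∑ j ∈ Finset.range (m + 1 - i),
        ((m.factorial : ℝ) / ((i.factorial : ℝ) * (j.factorial : ℝ) *
            ((m - i - j).factorial : ℝ)) * u ^ i * v ^ j * (1 - u - v) ^ (m - i - j)) •
          θ i j (m - i - j))
    (Gt : ℝ → ℝ → V)
    (hGt : ∀ α β : ℝ, G (α * (1 - β)) (α * β) = α ^ n • Gt α β)
    (hcont : ∀ β : ℝ, ContinuousAt (fun α => Gt α β) 0) :
    ∀ β : ℝ, Gt 0 β =
      ∑ i ∈ Finset.range (n + 1),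
        ((m.factorial : ℝ) / ((i.factorial : ℝ) * ((n - i).factorial : ℝ) *
            ((m - n).factorial : ℝ)) * β ^ (n - i) * (1 - β) ^ i) •
          θ i (n - i) (m - n) := by
  intro β
  have hG_eq : G = bernsteinSurface m θ := funext fun u => funext (hG u)
  have agree_off_zero : ∀ α ≠ (0 : ℝ), Gt α β = blowupQuotient m n θ β α := fun α hα =>
    (smul_right_inj (pow_ne_zero n hα)).1 <| by
      rw [← hGt, hG_eq, bernsteinSurface_blowup hθ]
  have agree_near_zero : (fun α => Gt α β) =ᶠ[𝓝 0] blowupQuotient m n θ β :=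
    ((hcont β).eventuallyEq_nhds_iff_eventuallyEq_nhdsNE
      (continuous_blowupQuotient β).continuousAt).1
      (eventually_mem_nhdsWithin.mono agree_off_zero)
  rw [agree_near_zero.eq_of_nhds, blowupQuotient_zero hnm hθ]
end

section
/- For the torus parametrization after the change of variables (u,v) ↦ (v/u, 1/u), given by x(u,v) = (u²-v²)(a(1+u²)-2bu), y(u,v) = 2uv(a(1+u²)-2bu), z(u,v) = c(u²-1)(u²+v²), w(u,v) = (u²+v²)(u²+1), the point (0,0) is a base point (all four polynomials vanish there), and along the line v = ku the limit of (x/w, y/w, z/w) as u → 0 equals (a(1-k²)/(1+k²), 2ak/(1+k²), -c). -/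
theorem torus_base_point_limit (a b c k : ℝ) (hab : b < a) (hb : 0 < b) (hc : 0 < c)
    (x y z w : ℝ → ℝ → ℝ)
    (hx : ∀ u v, x u v = (u^2 - v^2) * (a * (1 + u^2) - 2*b*u))
    (hy : ∀ u v, y u v = 2*u*v * (a * (1 + u^2) - 2*b*u))
    (hz : ∀ u v, z u v = c * (u^2 - 1) * (u^2 + v^2))
    (hw : ∀ u v, w u v = (u^2 + v^2) * (u^2 + 1)) :
    (x 0 0 = 0 ∧ y 0 0 = 0 ∧ z 0 0 = 0 ∧ w 0 0 = 0) ∧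
      Filter.Tendsto
        (fun u : ℝ => ((x u (k*u) / w u (k*u), y u (k*u) / w u (k*u),
          z u (k*u) / w u (k*u)) : ℝ × ℝ × ℝ))
        (nhdsWithin 0 {0}ᶜ)
        (nhds ((a * (1 - k^2) / (1 + k^2), 2*a*k / (1 + k^2), -c) : ℝ × ℝ × ℝ)) := by
  have hk : (0:ℝ) < 1 + k^2 := by positivity
  refine ⟨by simp [hx, hy, hz, hw], ?_⟩
  have hcont : Continuous fun u : ℝ =>
      ((((1 - k^2) * (a * (1 + u^2) - 2*b*u)) / ((1 + k^2) * (u^2 + 1)),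
        ((2*k) * (a * (1 + u^2) - 2*b*u)) / ((1 + k^2) * (u^2 + 1)),
        c * (u^2 - 1) / (u^2 + 1)) : ℝ × ℝ × ℝ) := by
    refine Continuous.prodMk ?_ (Continuous.prodMk ?_ ?_)
    · exact Continuous.div (by continuity) (by continuity) (fun u => by positivity)
    · exact Continuous.div (by continuity) (by continuity) (fun u => by positivity)
    · exact Continuous.div (by continuity) (by continuity) (fun u => by positivity)
  have hlim := (hcont.tendsto 0).mono_left (nhdsWithin_le_nhds (s := {0}ᶜ))
  have hval : ((((1 - k^2) * (a * (1 + (0:ℝ)^2) - 2*b*0)) / ((1 + k^2) * ((0:ℝ)^2 + 1)),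
        ((2*k) * (a * (1 + (0:ℝ)^2) - 2*b*0)) / ((1 + k^2) * ((0:ℝ)^2 + 1)),
        c * ((0:ℝ)^2 - 1) / ((0:ℝ)^2 + 1)) : ℝ × ℝ × ℝ)
      = ((a * (1 - k^2) / (1 + k^2), 2*a*k / (1 + k^2), -c) : ℝ × ℝ × ℝ) := by
    norm_num; constructor <;> ring
  rw [hval] at hlim
  refine hlim.congr' ?_
  refine Filter.eventuallyEq_of_mem self_mem_nhdsWithin fun u hu => ?_
  have hu : u ≠ 0 := hu
  have hu2 : u^2 ≠ 0 := pow_ne_zero _ hu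
  have h1 : u^2 + 1 ≠ 0 := by positivity
  have h2 : (1 + k^2) ≠ 0 := ne_of_gt hk
  simp only [hx, hy, hz, hw]
  refine Prod.ext ?_ (Prod.ext ?_ ?_)
  · field_simp
  · field_simp
  · field_simp
end
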